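/- Let g : {0,1}³ → {0,1} be permutive in the center variable, i.e., for all fixed x,z the map y ↦ g(x,y,z) is a bijection of {0,1}. Then for every n ≥ 1 and every triangular block b of size n, the number of triangular blocks c of size n+1 with g(c) = b is exactly 2^(n+1). -/

import Mathlib

/-- The set of lattice positions of a triangular block of size `r`:
pairs `(i,j)` with `i,j ≥ 1` and `i + j ≤ r + 1`. -/
def Tri (r : ℕ) : Finset (ℕ × ℕ) :=
  (Finset.range (r + 2) ×ˢ Finset.range (r + 2)).filter
    (fun p => 1 ≤ p.1 ∧ 1 ≤ p.2 ∧ p.1 + p.2 ≤ r + 1)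

/-- A triangular block of size `r`: an assignment of values in `{0,1}` to the
positions of `Tri r`. -/
def TriBlock (r : ℕ) := {p // p ∈ Tri r} → Fin 2

instance (r : ℕ) : Fintype (TriBlock r) := by unfold TriBlock; infer_instance
instance (r : ℕ) : DecidableEq (TriBlock r) := by unfold TriBlock; infer_instance

/-- Extend a triangular block to a total function on `ℕ × ℕ` (zero outside). -/
def ext {r : ℕ} (b : TriBlock r) : ℕ → ℕ → Fin 2 :=
  fun i j => if h : (i, j) ∈ Tri r then b ⟨(i, j), h⟩ else 0

/-- The value of block `b` at position `(i,j)` (zero outside the block). -/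
def cell {r : ℕ} (b : TriBlock r) (i j : ℕ) : Fin 2 := ext b i j

/-- One application of the local rule `g` (arguments: top, center, right)
at every site: `c(i,j) = g(b(i,j+1), b(i,j), b(i+1,j))`. -/
def step (g : Fin 2 → Fin 2 → Fin 2 → Fin 2) (s : ℕ → ℕ → Fin 2) : ℕ → ℕ → Fin 2 :=
  fun i j => g (s i (j + 1)) (s i j) (s (i + 1) j)

/-- Restrict a total function to a triangular block of size `r`. -/
def contract (r : ℕ) (s : ℕ → ℕ → Fin 2) : TriBlock r := fun q => s q.1.1 q.1.2

/-- The block evolution operator: maps a block of size `m` (intended `m = r+1`)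
to a block of size `r` via `c(i,j) = g(b(i,j+1), b(i,j), b(i+1,j))`. -/
def evolve (g : Fin 2 → Fin 2 → Fin 2 → Fin 2) {m : ℕ} (r : ℕ) (b : TriBlock m) :
    TriBlock r := contract r (step g (ext b))

/-- The `n`-fold iterate of the block evolution operator, from blocks of size `m`
(intended `m = r + n`) to blocks of size `r`. -/
def evolveN (g : Fin 2 → Fin 2 → Fin 2 → Fin 2) (n : ℕ) {m : ℕ} (r : ℕ)
    (b : TriBlock m) : TriBlock r := contract r ((step g)^[n] (ext b))

/-- The single-cell block consisting of a `1`. -/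
def oneBlock : TriBlock 1 := fun _ => 1

/-- Number of cells in state 1 in a block. -/
def numOnes {r : ℕ} (b : TriBlock r) : ℕ :=
  (@Finset.filter _ (fun x => b x = 1) (fun x => instDecidableEqFin 2 (b x) 1) Finset.univ).card

/-- Number of cells in state 0 in a block. -/
def numZeros {r : ℕ} (b : TriBlock r) : ℕ :=
  (@Finset.filter _ (fun x => b x = 0) (fun x => instDecidableEqFin 2 (b x) 0) Finset.univ).card

/-- The set of `n`-step preimages of the single-cell block `1`:
blocks of size `n + 1` mapped by `n` iterations of the block evolution
operator of `g` to the single cell `1`. -/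
def preimages (g : Fin 2 → Fin 2 → Fin 2 → Fin 2) (n : ℕ) :
    Finset (TriBlock (n + 1)) :=
  Finset.univ.filter (fun b => evolveN g n 1 b = oneBlock)

/-- `Pₙ(1)`: the density of ones after `n` iterations, starting from a
Bernoulli-`ρ` initial measure, computed by summing the probabilities of all
`n`-step preimages of the single cell `1`. -/
noncomputable def Pn (g : Fin 2 → Fin 2 → Fin 2 → Fin 2) (n : ℕ) (ρ : ℝ) : ℝ :=
  ∑ a ∈ preimages g n, ρ ^ numOnes a * (1 - ρ) ^ numZeros a

/-! A preimage `c` of `b` is determined by `b` together with its outer diagonal `i + j = n + 2`: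
since `g` is permutive in the center, the equation `g (c i (j+1)) (c i j) (c (i+1) j) = b i j`
determines `c i j` from its top and right neighbours, one diagonal further out. Conversely every
choice of the `n + 1` outer values can be propagated inwards in this way, so the preimages are in
bijection with `Fin (n + 1) → Fin 2`. -/

lemma mem_Tri {r i j : ℕ} : (i, j) ∈ Tri r ↔ 1 ≤ i ∧ 1 ≤ j ∧ i + j ≤ r + 1 := by
  simp only [Tri, Finset.mem_filter, Finset.mem_product, Finset.mem_range]
  constructor
  · rintro ⟨_, h⟩
    exact h
  · rintro ⟨h1, h2, h3⟩
    exact ⟨⟨by omega, by omega⟩, h1, h2, h3⟩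

lemma cell_of_mem {r i j : ℕ} (c : TriBlock r) (h : (i, j) ∈ Tri r) :
    cell c i j = c ⟨(i, j), h⟩ :=
  dif_pos h

lemma evolve_eq_iff (g : Fin 2 → Fin 2 → Fin 2 → Fin 2) {m r : ℕ} (c : TriBlock m)
    (b : TriBlock r) :
    evolve g r c = b ↔ ∀ i j, (i, j) ∈ Tri r →
      g (cell c i (j + 1)) (cell c i j) (cell c (i + 1) j) = cell b i j := by
  constructor
  · rintro rfl i j h
    rw [cell_of_mem _ h]
    rfl
  · intro h
    funext ⟨⟨i, j⟩, hij⟩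
    rw [← cell_of_mem b hij, ← h i j hij]
    rfl

def outerDiag {n : ℕ} (c : TriBlock (n + 1)) : Fin (n + 1) → Fin 2 :=
  fun i => cell c (i + 1) (n + 1 - i)

section CenterPermutive

variable {g : Fin 2 → Fin 2 → Fin 2 → Fin 2} (hg : ∀ x z, Function.Bijective (fun y => g x y z))
  {n : ℕ}

include hg in
lemma eq_of_evolve_eq_of_outerDiag_eq {b : TriBlock n} {c c' : TriBlock (n + 1)}
    (hc : evolve g n c = b) (hc' : evolve g n c' = b) (hd : outerDiag c = outerDiag c') :
    c = c' := by
  rw [evolve_eq_iff] at hc hc'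
  have cell_eq : ∀ k i j, 1 ≤ i → 1 ≤ j → i + j + k = n + 2 → cell c i j = cell c' i j := by
    intro k
    induction k with
    | zero =>
      intro i j hi _ hk
      have := congrFun hd ⟨i - 1, by omega⟩
      simp only [outerDiag] at this
      rwa [show i - 1 + 1 = i by omega, show n + 1 - (i - 1) = j by omega] at this
    | succ k ih =>
      intro i j hi hj hk
      have hij : (i, j) ∈ Tri n := mem_Tri.2 ⟨hi, hj, by omega⟩
      apply (hg (cell c i (j + 1)) (cell c (i + 1) j)).1
      simp only
      rw [hc i j hij, ih i (j + 1) hi (by omega) (by omega), ih (i + 1) j (by omega) hj (by omega),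
        hc' i j hij]
  funext ⟨⟨i, j⟩, hij⟩
  obtain ⟨hi, hj, hr⟩ := mem_Tri.1 hij
  rw [← cell_of_mem c hij, ← cell_of_mem c' hij]
  exact cell_eq (n + 2 - (i + j)) i j hi hj (by omega)

noncomputable def solveCenter (x z w : Fin 2) : Fin 2 :=
  (Equiv.ofBijective _ (hg x z)).symm w

lemma apply_solveCenter (x z w : Fin 2) : g x (solveCenter hg x z w) z = w :=
  Equiv.ofBijective_apply_symm_apply _ (hg x z) w

/-- `fillDiag hg b d k i` is the value at row `i` on the diagonal `i + j = n + 2 - k` of the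
preimage of `b` with outer diagonal `d`. -/
noncomputable def fillDiag (b : TriBlock n) (d : Fin (n + 1) → Fin 2) : ℕ → ℕ → Fin 2
  | 0, i => d (Fin.ofNat (n + 1) (i - 1))
  | k + 1, i => solveCenter hg (fillDiag b d k i) (fillDiag b d k (i + 1))
      (cell b i (n + 1 - k - i))

noncomputable def fillBlock (b : TriBlock n) (d : Fin (n + 1) → Fin 2) : TriBlock (n + 1) :=
  fun q => fillDiag hg b d (n + 2 - (q.1.1 + q.1.2)) q.1.1

variable (b : TriBlock n) (d : Fin (n + 1) → Fin 2)

lemma cell_fillBlock {i j : ℕ} (hi : 1 ≤ i) (hj : 1 ≤ j) (hij : i + j ≤ n + 2) :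
    cell (fillBlock hg b d) i j = fillDiag hg b d (n + 2 - (i + j)) i :=
  cell_of_mem _ (mem_Tri.2 ⟨hi, hj, hij⟩)

lemma evolve_fillBlock : evolve g n (fillBlock hg b d) = b := by
  rw [evolve_eq_iff]
  intro i j hij
  obtain ⟨hi, hj, hr⟩ := mem_Tri.1 hij
  rw [cell_fillBlock hg b d hi (by omega) (by omega), cell_fillBlock hg b d hi hj (by omega),
    cell_fillBlock hg b d (by omega) hj (by omega),
    show n + 2 - (i + j) = (n + 1 - (i + j)) + 1 by omega,
    show n + 2 - (i + (j + 1)) = n + 1 - (i + j) by omega,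
    show n + 2 - (i + 1 + j) = n + 1 - (i + j) by omega, fillDiag,
    show n + 1 - (n + 1 - (i + j)) - i = j by omega, apply_solveCenter hg]

lemma outerDiag_fillBlock : outerDiag (fillBlock hg b d) = d := by
  funext i
  rw [outerDiag, cell_fillBlock hg b d (by omega) (by omega) (by omega),
    show n + 2 - (i + 1 + (n + 1 - i)) = 0 by omega, fillDiag, Nat.add_sub_cancel,
    Fin.ofNat_val_eq_self]

end CenterPermutive

theorem stmt5_general (g : Fin 2 → Fin 2 → Fin 2 → Fin 2)
    (hg : ∀ x z, Function.Bijective (fun y => g x y z))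
    (n : ℕ) (b : TriBlock n) :
    (Finset.univ.filter (fun c : TriBlock (n + 1) => evolve g n c = b)).card
      = 2 ^ (n + 1) := by
  have card_diag : (Finset.univ : Finset (Fin (n + 1) → Fin 2)).card = 2 ^ (n + 1) := by simp
  rw [← card_diag]
  refine Finset.card_nbij outerDiag (fun _ _ => Finset.mem_univ _) ?_ ?_
  · intro c hc c' hc' hd
    simp only [Finset.coe_filter, Finset.mem_univ, true_and, Set.mem_ofPred_eq] at hc hc'
    exact eq_of_evolve_eq_of_outerDiag_eq hg hc hc' hd
  · intro d _
    exact ⟨fillBlock hg b d, by simpa using evolve_fillBlock hg b d, outerDiag_fillBlock hg b d⟩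

/-- if `g` is permutive in the center variable, then every
triangular block of size `n` (`n ≥ 1`) has exactly `2^(n+1)` one-step preimages
under the block evolution operator. -/
theorem stmt5 (g : Fin 2 → Fin 2 → Fin 2 → Fin 2)
    (hg : ∀ x z, Function.Bijective (fun y => g x y z))
    (n : ℕ) (hn : 1 ≤ n) (b : TriBlock n) :
    (Finset.univ.filter (fun c : TriBlock (n + 1) => evolve g n c = b)).card
      = 2 ^ (n + 1) :=
  stmt5_general g hg n b
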